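/- Let n ≥ 1, let A be a 2n-adically closed integral domain, and let p, q be prime ideals of A. Let ST denote the multiplicative subset {st : s ∈ A − p, t ∈ A − q} of A. Then the localization (ST)^{-1}A is a local ring. (Equivalently, the join [A_p, A_q] of the subrings A_p and A_q inside Frac(A) is a local ring.) -/

import Mathlib

/-- A ring `R` is *`n`-adically closed* if every monic polynomial of degree `n` with
coefficients in `R` has a root in `R`. -/
def AdicallyClosed (n : ℕ) (R : Type*) [CommRing R] : Prop :=
  ∀ p : Polynomial R, p.Monic → p.natDegree = n → ∃ x : R, p.IsRoot x

/-- The multiplicative set `ST = {s * t : s ∈ A - p, t ∈ A - q}` associated to two prime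
ideals `p, q` of `A`. -/
def primeComplMul {A : Type*} [CommRing A] (p q : Ideal A) [hp : p.IsPrime]
    [hq : q.IsPrime] : Submonoid A where
  carrier := {x | ∃ s ∉ p, ∃ t ∉ q, x = s * t}
  one_mem' := ⟨1, (fun h => hp.ne_top (Ideal.eq_top_iff_one p |>.mpr h)), 1, (fun h => hq.ne_top (Ideal.eq_top_iff_one q |>.mpr h)), (one_mul 1).symm⟩
  mul_mem' := by
    rintro x y ⟨s₁, hs₁, t₁, ht₁, rfl⟩ ⟨s₂, hs₂, t₂, ht₂, rfl⟩
    refine ⟨s₁ * s₂, fun hs => ?_, t₁ * t₂, fun ht => ?_, by ring⟩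
    · rcases hp.mem_or_mem hs with h | h
      exacts [hs₁ h, hs₂ h]
    · rcases hq.mem_or_mem ht with h | h
      exacts [ht₁ h, ht₂ h]

/-!
A root `x` of `f` gives the root `x ^ n` of `f (X ^ n)`, so `A` is `2`-adically closed.
The primes of `(ST)⁻¹A` are those of `A` contained in `p ∩ q`, and it suffices that for any two
such primes `P, Q` the ideal `P + Q` still misses `ST`. If `s * t = a + b` with `a ∈ P`,
`b ∈ Q`, let `x` be a root of `X ^ 2 + (s + t) X + a`: then `x (x + s + t) = -a ∈ P` and
`(x + s) (x + t) = b ∈ Q`, and whichever factors lie in `P` and `Q`, their difference is `s`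
or `t`, which would then lie in `p` or in `q`.
-/

open Polynomial

theorem AdicallyClosed.of_mul {R : Type*} [CommRing R] {m n : ℕ}
    (h : AdicallyClosed (m * n) R) (hn : n ≠ 0) : AdicallyClosed m R := by
  intro f hf hdeg
  nontriviality R
  obtain ⟨x, hx⟩ := h (f.comp (X ^ n)) (hf.comp (monic_X_pow n) (by rwa [natDegree_X_pow]))
    (by rw [natDegree_comp_eq_of_mul_ne_zero (by simp [hf.leadingCoeff]), hdeg, natDegree_X_pow])
  exact ⟨x ^ n, by simpa [IsRoot] using hx⟩

theorem AdicallyClosed.exists_sq_add_mul_add_eq_zero {R : Type*} [CommRing R]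
    (h : AdicallyClosed 2 R) (u v : R) : ∃ x : R, x ^ 2 + u * x + v = 0 := by
  nontriviality R
  have hmon : (X ^ 2 + (C u * X + C v) : R[X]).Monic := monic_X_pow_add (by compute_degree!)
  obtain ⟨x, hx⟩ := h _ hmon (by rw [← add_assoc]; compute_degree!)
  exact ⟨x, by simpa [add_assoc] using hx⟩

theorem AdicallyClosed.mul_notMem_sup {A : Type*} [CommRing A] (hA : AdicallyClosed 2 A)
    {p q P Q : Ideal A} [P.IsPrime] [Q.IsPrime] (hP : P ≤ p ⊓ q) (hQ : Q ≤ p ⊓ q) {s t : A}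
    (hs : s ∉ p) (ht : t ∉ q) : s * t ∉ P ⊔ Q := by
  intro hst
  obtain ⟨a, ha, b, hb, hab⟩ := Submodule.mem_sup.mp hst
  obtain ⟨x, hx⟩ := hA.exists_sq_add_mul_add_eq_zero (s + t) a
  have hxP : x * (x + s + t) ∈ P := by
    rw [show x * (x + s + t) = -a by linear_combination hx]
    exact P.neg_mem ha
  have hxQ : (x + s) * (x + t) ∈ Q := by
    rw [show (x + s) * (x + t) = b by linear_combination hx - hab]
    exact hb
  rcases Ideal.IsPrime.mem_or_mem ‹_› hxP with h₁ | h₁ <;>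
    rcases Ideal.IsPrime.mem_or_mem ‹_› hxQ with h₂ | h₂
  · exact hs (by simpa using p.sub_mem (hQ h₂).1 (hP h₁).1)
  · exact ht (by simpa using q.sub_mem (hQ h₂).2 (hP h₁).2)
  · exact ht (by simpa using q.sub_mem (hP h₁).2 (hQ h₂).2)
  · exact hs (by simpa using p.sub_mem (hP h₁).1 (hQ h₂).1)

theorem IsLocalization.isLocalRing_of_disjoint_sup {A : Type*} [CommRing A] (S : Submonoid A)
    (L : Type*) [CommRing L] [Algebra A L] [IsLocalization S L] [Nontrivial L]
    (h : ∀ P Q : Ideal A, P.IsPrime → Q.IsPrime → Disjoint (S : Set A) P →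
      Disjoint (S : Set A) Q → Disjoint (S : Set A) ↑(P ⊔ Q)) :
    IsLocalRing L := by
  suffices ∀ M₁ M₂ : Ideal L, M₁.IsMaximal → M₂.IsMaximal → M₁ ≤ M₂ by
    obtain ⟨M, hM⟩ := Ideal.exists_maximal L
    exact IsLocalRing.of_unique_max_ideal
      ⟨M, hM, fun M' hM' => le_antisymm (this M' M hM' hM) (this M M' hM hM')⟩
  intro M₁ M₂ hM₁ hM₂
  have hdisj (M : Ideal L) (hM : M.IsMaximal) : Disjoint (S : Set A) (M.under A) :=
    (disjoint_under_iff S L M).mpr hM.ne_top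
  obtain ⟨P, hP, hle, hPS⟩ := Ideal.exists_le_prime_disjoint _ S
    (h _ _ (hM₁.isPrime.under A) (hM₂.isPrime.under A) (hdisj M₁ hM₁) (hdisj M₂ hM₂)).symm
  have hPL : (P.map (algebraMap A L)).IsPrime :=
    isPrime_of_isPrime_disjoint S L P hP hPS.symm
  have hmap (M : Ideal L) (hM : M.IsMaximal) (hMP : M.under A ≤ P) :
      M = P.map (algebraMap A L) :=
    hM.eq_of_le hPL.ne_top (map_under S L M ▸ Ideal.map_mono hMP)
  rw [hmap M₁ hM₁ (le_sup_left.trans hle), hmap M₂ hM₂ (le_sup_right.trans hle)]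

section primeComplMul

variable {A : Type*} [CommRing A] {p q : Ideal A} [p.IsPrime] [q.IsPrime]

theorem le_inf_of_disjoint_primeComplMul {P : Ideal A}
    (h : Disjoint (primeComplMul p q : Set A) P) : P ≤ p ⊓ q := by
  intro x hx
  constructor
  · by_contra hxp
    exact Set.disjoint_left.mp h ⟨x, hxp, 1, q.one_notMem, (mul_one x).symm⟩ hx
  · by_contra hxq
    exact Set.disjoint_left.mp h ⟨1, p.one_notMem, x, hxq, (one_mul x).symm⟩ hx

theorem primeComplMul_le_nonZeroDivisors [IsDomain A] :
    primeComplMul p q ≤ nonZeroDivisors A := by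
  rintro _ ⟨s, hs, t, ht, rfl⟩
  exact mem_nonZeroDivisors_of_ne_zero
    (mul_ne_zero (fun h => hs (h ▸ p.zero_mem)) (fun h => ht (h ▸ q.zero_mem)))

end primeComplMul

/-- Let `A` be a `2n`-adically closed domain (`n ≥ 1`) and `p, q` prime ideals of `A`.
Then the localization of `A` at the multiplicative set `{s * t : s ∉ p, t ∉ q}` is a local
ring; equivalently, the join `[A_p, A_q]` inside `Frac A` is a local ring. -/
theorem isLocalRing_localization_primeComplMul {A : Type*} [CommRing A] [IsDomain A]
    (n : ℕ) (hn : 1 ≤ n) (hA : AdicallyClosed (2 * n) A) (p q : Ideal A) [p.IsPrime]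
    [q.IsPrime] : IsLocalRing (Localization (primeComplMul p q)) := by
  have hA₂ : AdicallyClosed 2 A := hA.of_mul (by omega)
  have : IsDomain (Localization (primeComplMul p q)) :=
    IsLocalization.isDomain_localization primeComplMul_le_nonZeroDivisors
  refine IsLocalization.isLocalRing_of_disjoint_sup (primeComplMul p q) _
    fun P Q _ _ hP hQ => Set.disjoint_left.mpr ?_
  rintro _ ⟨s, hs, t, ht, rfl⟩
  exact hA₂.mul_notMem_sup (le_inf_of_disjoint_primeComplMul hP)
    (le_inf_of_disjoint_primeComplMul hQ) hs ht
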